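/- arXiv:0806.3722 — 2 statements merged into one kernel-verified Lean document; each statement's English description precedes it below -/
import Mathlib

section
/- Let F1 and F2 be finite subsets of ℤ² such that F1 is uniquely determined by its line sums and |F1| = |F2|. Put α = α(F1, F2). Then |F1 △ F2| ≤ 2α·√(2|F1|). -/
/-!
A uniquely determined set has no switching component, so its rows are nested: a row at least as
long as another one contains all of its columns. Hence `F1` is the threshold set
`{(i, j) | d < g i + h j}` of an additive function, where `d` is the number of distinct row sums,
`g i` counts the distinct row sums `≤ r_i` and `h j` the distinct row sums of the rows through
column `j`; both lie in `[0, d]`. Since `|F1| = |F2|`, comparing the sums of `g i + h j` over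
`F1` and over `F2` gives
`|F1 △ F2| ≤ 2 (Σ_i g i (r_i(F1) - r_i(F2)) + Σ_j h j (c_j(F1) - c_j(F2)))`, and as the line-sum
differences add up to `0`, `g` and `h` may be centred at `d / 2`, which bounds the right-hand side
by `d · 2α`. Finally the `d` distinct positive row sums add up to at most
`|F1|`, so `d (d + 1) ≤ 2 |F1|`.
-/

open Finset

/-- The row sum `r_i(F)`: the number of elements of `F` in row `i`. -/
def rowSum (F : Finset (ℤ × ℤ)) (i : ℤ) : ℤ :=
  ((F.filter fun p => p.1 = i).card : ℤ)

/-- The column sum `c_j(F)`: the number of elements of `F` in column `j`. -/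
def colSum (F : Finset (ℤ × ℤ)) (j : ℤ) : ℤ :=
  ((F.filter fun p => p.2 = j).card : ℤ)

/-- `F` is uniquely determined by its line sums. -/
def uniquelyDetermined (F : Finset (ℤ × ℤ)) : Prop :=
  ∀ F' : Finset (ℤ × ℤ),
    (∀ i, rowSum F' i = rowSum F i) → (∀ j, colSum F' j = colSum F j) → F' = F

/-- `Σ_j |c_j(F1) − c_j(F2)| + Σ_i |r_i(F1) − r_i(F2)|`; the sums over all of `ℤ`
reduce to the finite index sets below, since all other terms vanish. -/
def lineDiff (F1 F2 : Finset (ℤ × ℤ)) : ℤ :=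
  (∑ j ∈ (F1 ∪ F2).image Prod.snd, |colSum F1 j - colSum F2 j|)
    + ∑ i ∈ (F1 ∪ F2).image Prod.fst, |rowSum F1 i - rowSum F2 i|

/-- `α(F1, F2)`. -/
noncomputable def alpha (F1 F2 : Finset (ℤ × ℤ)) : ℝ :=
  (lineDiff F1 F2 : ℝ) / 2

open scoped symmDiff

namespace Finset

variable {ι R : Type*} [CommRing R] [LinearOrder R] [IsStrictOrderedRing R]

theorem two_mul_sum_mul_le_mul_sum_abs {s : Finset ι} {f x : ι → R} {D : R}
    (hf : ∀ i ∈ s, 0 ≤ f i ∧ f i ≤ D) (hx : ∑ i ∈ s, x i = 0) :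
    2 * ∑ i ∈ s, f i * x i ≤ D * ∑ i ∈ s, |x i| := by
  have hshift : 2 * ∑ i ∈ s, f i * x i = ∑ i ∈ s, (2 * f i - D) * x i := by
    simp only [sub_mul, sum_sub_distrib, ← mul_sum, hx, mul_assoc]
    ring
  rw [hshift, mul_sum]
  refine sum_le_sum fun i hi => ?_
  obtain ⟨hf0, hfD⟩ := hf i hi
  have hD : |2 * f i - D| ≤ D := abs_le.2 ⟨by linarith, by linarith⟩
  calc (2 * f i - D) * x i ≤ |2 * f i - D| * |x i| := (le_abs_self _).trans (abs_mul _ _).le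
    _ ≤ D * |x i| := mul_le_mul_of_nonneg_right hD (abs_nonneg _)

theorem card_symmDiff_le_two_mul_sum_sub_sum {α : Type*} [DecidableEq α] {s t : Finset α}
    (hcard : #s = #t) (w : α → ℤ) (c : ℤ) (hs : ∀ a ∈ s \ t, c < w a)
    (ht : ∀ a ∈ t \ s, w a ≤ c) :
    (#(s ∆ t) : ℤ) ≤ 2 * (∑ a ∈ s, w a - ∑ a ∈ t, w a) := by
  have hm : #(t \ s) = #(s \ t) := card_sdiff_comm hcard.symm
  have hs' : #(s \ t) • (c + 1) ≤ ∑ a ∈ s \ t, w a := card_nsmul_le_sum _ _ _ hs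
  have ht' : ∑ a ∈ t \ s, w a ≤ #(t \ s) • c := sum_le_card_nsmul _ _ _ ht
  rw [← sum_sdiff_sub_sum_sdiff, symmDiff_def, sup_eq_union,
    card_union_of_disjoint disjoint_sdiff_sdiff, hm]
  rw [hm, nsmul_eq_mul] at ht'
  rw [nsmul_eq_mul] at hs'
  push_cast
  linarith

theorem two_mul_sum_range_one_add (k : ℕ) : 2 * ∑ n ∈ range k, (1 + (n : ℤ)) = k * (k + 1) := by
  induction k with
  | zero => simp
  | succ k ih => rw [sum_range_succ, mul_add, ih]; push_cast; ring

theorem card_mul_card_add_one_le_two_mul_sum {s : Finset ℤ} (hs : ∀ x ∈ s, 1 ≤ x) :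
    (#s : ℤ) * (#s + 1) ≤ 2 * ∑ x ∈ s, x := by
  rw [← two_mul_sum_range_one_add]
  exact mul_le_mul_of_nonneg_left (sum_range_le_sum hs) zero_le_two

end Finset

theorem sum_comp_fst_eq_sum_mul_rowSum {S : Finset (ℤ × ℤ)} {I : Finset ℤ}
    (hS : ∀ p ∈ S, p.1 ∈ I) (g : ℤ → ℤ) :
    ∑ p ∈ S, g p.1 = ∑ i ∈ I, g i * rowSum S i := by
  rw [← sum_fiberwise_of_maps_to' hS]
  simp [rowSum, mul_comm]

theorem sum_comp_snd_eq_sum_mul_colSum {S : Finset (ℤ × ℤ)} {J : Finset ℤ}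
    (hS : ∀ p ∈ S, p.2 ∈ J) (h : ℤ → ℤ) :
    ∑ p ∈ S, h p.2 = ∑ j ∈ J, h j * colSum S j := by
  rw [← sum_fiberwise_of_maps_to' hS]
  simp [colSum, mul_comm]

theorem sum_rowSum {S : Finset (ℤ × ℤ)} {I : Finset ℤ} (hS : ∀ p ∈ S, p.1 ∈ I) :
    ∑ i ∈ I, rowSum S i = #S := by
  simpa using (sum_comp_fst_eq_sum_mul_rowSum hS 1).symm

theorem sum_colSum {S : Finset (ℤ × ℤ)} {J : Finset ℤ} (hS : ∀ p ∈ S, p.2 ∈ J) :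
    ∑ j ∈ J, colSum S j = #S := by
  simpa using (sum_comp_snd_eq_sum_mul_colSum hS 1).symm

theorem card_symmDiff_le_mul_lineDiff {F1 F2 : Finset (ℤ × ℤ)} (hcard : #F1 = #F2)
    {g h : ℤ → ℤ} {t D : ℤ} (hg : ∀ i, 0 ≤ g i ∧ g i ≤ D) (hh : ∀ j, 0 ≤ h j ∧ h j ≤ D)
    (hF1 : ∀ p, p ∈ F1 ↔ t < g p.1 + h p.2) :
    (#(F1 ∆ F2) : ℤ) ≤ D * lineDiff F1 F2 := by
  set I := (F1 ∪ F2).image Prod.fst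
  set J := (F1 ∪ F2).image Prod.snd
  have hI1 : ∀ p ∈ F1, p.1 ∈ I := fun p hp => mem_image_of_mem _ (mem_union_left _ hp)
  have hI2 : ∀ p ∈ F2, p.1 ∈ I := fun p hp => mem_image_of_mem _ (mem_union_right _ hp)
  have hJ1 : ∀ p ∈ F1, p.2 ∈ J := fun p hp => mem_image_of_mem _ (mem_union_left _ hp)
  have hJ2 : ∀ p ∈ F2, p.2 ∈ J := fun p hp => mem_image_of_mem _ (mem_union_right _ hp)
  have hweight : ∑ p ∈ F1, (g p.1 + h p.2) - ∑ p ∈ F2, (g p.1 + h p.2)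
      = ∑ i ∈ I, g i * (rowSum F1 i - rowSum F2 i)
        + ∑ j ∈ J, h j * (colSum F1 j - colSum F2 j) := by
    simp only [sum_add_distrib, sum_comp_fst_eq_sum_mul_rowSum hI1,
      sum_comp_fst_eq_sum_mul_rowSum hI2, sum_comp_snd_eq_sum_mul_colSum hJ1,
      sum_comp_snd_eq_sum_mul_colSum hJ2, mul_sub, sum_sub_distrib]
    ring
  have hrows : 2 * ∑ i ∈ I, g i * (rowSum F1 i - rowSum F2 i)
      ≤ D * ∑ i ∈ I, |rowSum F1 i - rowSum F2 i| :=
    two_mul_sum_mul_le_mul_sum_abs (fun i _ => hg i)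
      (by rw [sum_sub_distrib, sum_rowSum hI1, sum_rowSum hI2, hcard, sub_self])
  have hcols : 2 * ∑ j ∈ J, h j * (colSum F1 j - colSum F2 j)
      ≤ D * ∑ j ∈ J, |colSum F1 j - colSum F2 j| :=
    two_mul_sum_mul_le_mul_sum_abs (fun j _ => hh j)
      (by rw [sum_sub_distrib, sum_colSum hJ1, sum_colSum hJ2, hcard, sub_self])
  have hsymm := card_symmDiff_le_two_mul_sum_sub_sum hcard (fun p => g p.1 + h p.2) t
    (fun p hp => (hF1 p).1 (mem_sdiff.1 hp).1)
    (fun p hp => not_lt.1 fun hlt => (mem_sdiff.1 hp).2 ((hF1 p).2 hlt))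
  rw [lineDiff]
  linarith

theorem rowSum_insert {s : Finset (ℤ × ℤ)} {p : ℤ × ℤ} (hp : p ∉ s) (i : ℤ) :
    rowSum (insert p s) i = rowSum s i + if p.1 = i then 1 else 0 := by
  unfold rowSum
  rw [filter_insert]
  split_ifs <;> simp [card_insert_of_notMem, hp]

theorem colSum_insert {s : Finset (ℤ × ℤ)} {p : ℤ × ℤ} (hp : p ∉ s) (j : ℤ) :
    colSum (insert p s) j = colSum s j + if p.2 = j then 1 else 0 := by
  unfold colSum
  rw [filter_insert]
  split_ifs <;> simp [card_insert_of_notMem, hp]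

theorem rowSum_pos {A : Finset (ℤ × ℤ)} {i : ℤ} (hi : i ∈ A.image Prod.fst) : 0 < rowSum A i := by
  obtain ⟨p, hp, rfl⟩ := mem_image.1 hi
  unfold rowSum
  exact_mod_cast card_pos.2 ⟨p, by simp [hp]⟩

namespace uniquelyDetermined

variable {A : Finset (ℤ × ℤ)}

/-- Otherwise trading `(i, j), (i', j')` for `(i, j'), (i', j)` would preserve all line sums. -/
theorem mem_of_switch (hA : uniquelyDetermined A) {i i' j j' : ℤ} (hij : (i, j) ∈ A)
    (hij' : (i', j') ∈ A) (hij'_not : (i, j') ∉ A) : (i', j) ∈ A := by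
  by_contra hi'j
  set core := (A.erase (i, j)).erase (i', j')
  have hcore : core ⊆ A := (erase_subset _ _).trans (erase_subset _ _)
  have hne : (i, j) ≠ (i', j') := by
    rintro ⟨⟩
    exact hij'_not hij
  have hA_eq : A = insert (i, j) (insert (i', j') core) := by
    rw [insert_erase (mem_erase.2 ⟨hne.symm, hij'⟩), insert_erase hij]
  have h1 : (i, j) ∉ insert (i', j') core := by simp [core, hne]
  have h2 : (i', j') ∉ core := by simp [core]
  have h3 : (i, j') ∉ insert (i', j) core := by
    simp only [mem_insert, not_or]
    exact ⟨fun h => by obtain ⟨⟩ := h; exact hij'_not hij, fun h => hij'_not (hcore h)⟩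
  have h4 : (i', j) ∉ core := fun h => hi'j (hcore h)
  have hswap := hA (insert (i, j') (insert (i', j) core))
    (fun t => by rw [hA_eq, rowSum_insert h1, rowSum_insert h2, rowSum_insert h3,
      rowSum_insert h4])
    (fun t => by rw [hA_eq, colSum_insert h1, colSum_insert h2, colSum_insert h3,
      colSum_insert h4]; ring)
  exact hij'_not (hswap ▸ mem_insert_self _ _)

theorem mem_of_rowSum_le (hA : uniquelyDetermined A) {i i' j : ℤ}
    (hle : rowSum A i ≤ rowSum A i') (hij : (i, j) ∈ A) : (i', j) ∈ A := by
  by_contra hi'j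
  have hcard : #{p ∈ A | p.1 = i'} ≤ #({p ∈ A | p.1 = i}.erase (i, j)) := by
    refine card_le_card_of_injOn (fun p => (i, p.2)) ?_ ?_
    · rintro ⟨a, b⟩ hp
      obtain ⟨hab, rfl⟩ := mem_filter.1 hp
      refine mem_erase.2 ⟨?_, mem_filter.2 ⟨hA.mem_of_switch hab hij hi'j, rfl⟩⟩
      rintro ⟨⟩
      exact hi'j hab
    · rintro ⟨a, b⟩ hp ⟨a', b'⟩ hq ⟨⟩
      obtain ⟨-, rfl⟩ := mem_filter.1 hp
      obtain ⟨-, rfl⟩ := mem_filter.1 hq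
      rfl
  have hij_row : (i, j) ∈ {p ∈ A | p.1 = i} := mem_filter.2 ⟨hij, rfl⟩
  rw [card_erase_of_mem hij_row] at hcard
  have hpos := card_pos.2 ⟨_, hij_row⟩
  unfold rowSum at hle
  omega

end uniquelyDetermined

def distinctRowSums (A : Finset (ℤ × ℤ)) : Finset ℤ :=
  (A.image Prod.fst).image (rowSum A)

def rowSumsThrough (A : Finset (ℤ × ℤ)) (j : ℤ) : Finset ℤ :=
  {p ∈ A | p.2 = j}.image fun p => rowSum A p.1

theorem rowSumsThrough_subset (A : Finset (ℤ × ℤ)) (j : ℤ) :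
    rowSumsThrough A j ⊆ distinctRowSums A := by
  rw [distinctRowSums, image_image]
  exact image_subset_image (filter_subset _ _)

theorem card_distinctRowSums_mul_succ_le (A : Finset (ℤ × ℤ)) :
    (#(distinctRowSums A) : ℤ) * (#(distinctRowSums A) + 1) ≤ 2 * #A := by
  have hpos : ∀ v ∈ distinctRowSums A, 1 ≤ v := by
    intro v hv
    obtain ⟨i, hi, rfl⟩ := mem_image.1 hv
    exact rowSum_pos hi
  have hsum : ∑ v ∈ distinctRowSums A, v ≤ #A :=
    (sum_image_le_of_nonneg fun v hv => zero_le_one.trans (hpos v hv)).trans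
      (sum_rowSum fun p hp => mem_image_of_mem _ hp).le
  linarith [card_mul_card_add_one_le_two_mul_sum hpos]

/-- Rows are nested, so if `(i, j) ∈ A` then column `j` meets every row at least as long as row
`i`, and otherwise it meets no row at most as long. -/
theorem uniquelyDetermined.mem_iff {A : Finset (ℤ × ℤ)} (hA : uniquelyDetermined A) (p : ℤ × ℤ) :
    p ∈ A ↔ #(distinctRowSums A)
      < #{v ∈ distinctRowSums A | v ≤ rowSum A p.1} + #(rowSumsThrough A p.2) := by
  obtain ⟨i, j⟩ := p
  set R := distinctRowSums A
  set s := {v ∈ R | v ≤ rowSum A i}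
  set t := rowSumsThrough A j
  have hR : ∀ v ∈ R, ∃ i' ∈ A.image Prod.fst, rowSum A i' = v := fun v hv => mem_image.1 hv
  rw [← card_union_add_card_inter]
  constructor
  · intro hij
    have hRst : R ⊆ s ∪ t := by
      intro v hv
      obtain ⟨i', -, rfl⟩ := hR v hv
      rcases le_total (rowSum A i') (rowSum A i) with hle | hle
      · exact mem_union_left _ (mem_filter.2 ⟨hv, hle⟩)
      · exact mem_union_right _
          (mem_image.2 ⟨_, mem_filter.2 ⟨hA.mem_of_rowSum_le hle hij, rfl⟩, rfl⟩)
    have hst : rowSum A i ∈ s ∩ t := by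
      have hit : rowSum A i ∈ t := mem_image.2 ⟨_, mem_filter.2 ⟨hij, rfl⟩, rfl⟩
      exact mem_inter.2 ⟨mem_filter.2 ⟨rowSumsThrough_subset A j hit, le_rfl⟩, hit⟩
    have := card_le_card hRst
    have := card_pos.2 ⟨_, hst⟩
    omega
  · intro hlt
    by_contra hij
    have hdisj : Disjoint s t := by
      refine disjoint_left.2 fun v hvs hvt => hij ?_
      obtain ⟨p, hp, rfl⟩ := mem_image.1 hvt
      obtain ⟨hpA, rfl⟩ := mem_filter.1 hp
      exact hA.mem_of_rowSum_le (mem_filter.1 hvs).2 hpA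
    have : #(s ∪ t) ≤ #R :=
      card_le_card (union_subset (filter_subset _ _) (rowSumsThrough_subset A j))
    rw [disjoint_iff_inter_eq_empty.1 hdisj, card_empty] at hlt
    omega

theorem uniquelyDetermined.card_symmDiff_le {F1 F2 : Finset (ℤ × ℤ)} (hF1 : uniquelyDetermined F1)
    (hcard : #F1 = #F2) : (#(F1 ∆ F2) : ℤ) ≤ #(distinctRowSums F1) * lineDiff F1 F2 :=
  card_symmDiff_le_mul_lineDiff hcard (t := #(distinctRowSums F1))
    (g := fun i => #{v ∈ distinctRowSums F1 | v ≤ rowSum F1 i})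
    (h := fun j => #(rowSumsThrough F1 j))
    (fun i => ⟨by positivity, by exact_mod_cast card_filter_le _ _⟩)
    (fun j => ⟨by positivity, by exact_mod_cast card_le_card (rowSumsThrough_subset F1 j)⟩)
    (fun p => by exact_mod_cast hF1.mem_iff p)

/-- If `F1` is uniquely determined and `|F1| = |F2|`, then with `α = α(F1, F2)` we have
`|F1 △ F2| ≤ 2α·√(2|F1|)`. -/
theorem symmDiff_card_le_weak (F1 F2 : Finset (ℤ × ℤ))
    (hF1 : uniquelyDetermined F1) (hcard : F1.card = F2.card) :
    ((F1 ∆ F2).card : ℝ) ≤ 2 * alpha F1 F2 * Real.sqrt (2 * F1.card) := by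
  set d : ℤ := (#(distinctRowSums F1) : ℤ)
  have hsymm : ((F1 ∆ F2).card : ℝ) ≤ d * lineDiff F1 F2 := by
    exact_mod_cast hF1.card_symmDiff_le hcard
  have hd : (d : ℝ) ≤ Real.sqrt (2 * F1.card) := by
    refine Real.le_sqrt_of_sq_le ?_
    have : d ^ 2 ≤ 2 * #F1 := by nlinarith [card_distinctRowSums_mul_succ_le F1]
    exact_mod_cast this
  have hL : (0 : ℝ) ≤ lineDiff F1 F2 := by
    unfold lineDiff
    positivity
  calc ((F1 ∆ F2).card : ℝ) ≤ d * lineDiff F1 F2 := hsymm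
    _ ≤ Real.sqrt (2 * F1.card) * lineDiff F1 F2 := mul_le_mul_of_nonneg_right hd hL
    _ = 2 * alpha F1 F2 * Real.sqrt (2 * F1.card) := by rw [alpha]; ring
end

section
/- Let F2 be a nonempty finite subset of ℤ² and let F1 be a uniquely determined neighbour of F2. Put α = α(F2, F1). Then |F2 ∩ F1| / |F2| ≥ 1 − √2·α / √|F2|. -/
open Finset

/-- `F1` is a uniquely determined neighbour of `F2`: `F1` is uniquely determined by
its line sums, has the same row sums as `F2` in every row, and for some `n` such that
the column sums of both `F1` and `F2` are supported in columns `1, …, n`, there is a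
permutation `σ` of `{1, …, n}` ordering the column sums of `F2` non-increasingly
which also orders the column sums of `F1` non-increasingly. -/
def udNeighbour (F1 F2 : Finset (ℤ × ℤ)) : Prop :=
  uniquelyDetermined F1 ∧ (∀ i, rowSum F1 i = rowSum F2 i) ∧
    ∃ n : ℕ,
      (∀ j : ℤ, j < 1 ∨ (n : ℤ) < j → colSum F2 j = 0) ∧
      (∀ j : ℤ, j < 1 ∨ (n : ℤ) < j → colSum F1 j = 0) ∧
      ∃ σ : Equiv.Perm (Fin n),
        (∀ k l : Fin n, k ≤ l →
          colSum F2 ((σ l : ℕ) + 1 : ℤ) ≤ colSum F2 ((σ k : ℕ) + 1 : ℤ)) ∧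
        (∀ k l : Fin n, k ≤ l →
          colSum F1 ((σ l : ℕ) + 1 : ℤ) ≤ colSum F1 ((σ k : ℕ) + 1 : ℤ))

/-!
A uniquely determined set has no switching component, so any two of its columns are nested, and
listed by decreasing size its columns form a staircase: row `i` of `F1` occupies exactly the
first `r_i` columns in the order `σ`. Let `A` be the total excess of the column sums of `F2` over
those of `F1`; as the row sums agree, `α = A`. A point of `F2 \ F1` in a row with sum `t` lies in
a column of rank at least `t`, and comparing the columns of rank at least `t` row by row shows
that there are at most `A` such points for each value `t`. The `s` distinct row sums are positive
and sum to at most `|F2|`, so `s (s + 1) ≤ 2 |F2|` and `|F2 \ F1| ≤ s A ≤ √(2 |F2|) α`.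
-/

lemma Finset.sum_insert_insert_erase_erase {α M : Type*} [DecidableEq α] [AddCommMonoid M]
    (F : Finset α) (f : α → M) {a b c d : α} (ha : a ∉ F) (hb : b ∉ F) (hab : a ≠ b)
    (hc : c ∈ F) (hd : d ∈ F) (hcd : c ≠ d) :
    ∑ p ∈ insert a (insert b ((F.erase c).erase d)), f p + f c + f d =
      ∑ p ∈ F, f p + f a + f b := by
  have hb' : b ∉ (F.erase c).erase d := fun h => hb (mem_of_mem_erase (mem_of_mem_erase h))
  have ha' : a ∉ insert b ((F.erase c).erase d) := by
    rw [mem_insert, not_or]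
    exact ⟨hab, fun h => ha (mem_of_mem_erase (mem_of_mem_erase h))⟩
  rw [sum_insert ha', sum_insert hb', ← sum_erase_add _ _ hc,
    ← sum_erase_add _ _ (mem_erase.2 ⟨hcd.symm, hd⟩)]
  abel

lemma Finset.mem_iff_lt_card_of_isLowerSet {K : Finset ℕ} (hK : IsLowerSet (K : Set ℕ))
    (k : ℕ) : k ∈ K ↔ k < #K := by
  rcases hK.eq_univ_or_Iio with h | ⟨a, h⟩
  · exact absurd (h ▸ K.finite_toSet) Set.infinite_univ
  · obtain rfl : K = range a := coe_injective (by simpa using h)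
    simp

lemma Finset.card_mul_card_add_one_le_two_mul_sum_s9 {T : Finset ℤ} (hT : ∀ t ∈ T, 0 < t) :
    (#T : ℤ) * (#T + 1) ≤ 2 * ∑ t ∈ T, t := by
  induction T using Finset.induction_on_max with
  | empty => simp
  | insert a s ha ih =>
    have has : a ∉ s := fun h => lt_irrefl _ (ha a h)
    have hs : s ⊆ Ioo 0 a := fun t ht =>
      mem_Ioo.2 ⟨hT t (mem_insert_of_mem ht), ha t ht⟩
    have hcard := card_le_card hs
    have ha0 := hT a (mem_insert_self _ _)
    rw [Int.card_Ioo] at hcard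
    replace hcard : (#s : ℤ) + 1 ≤ a := by omega
    rw [card_insert_of_notMem has, sum_insert has]
    have := ih fun t ht => hT t (mem_insert_of_mem ht)
    push_cast
    nlinarith

lemma rowSum_eq_sum (F : Finset (ℤ × ℤ)) (i : ℤ) :
    rowSum F i = ∑ p ∈ F, if p.1 = i then 1 else 0 := by
  rw [rowSum, card_filter]
  push_cast
  rfl

lemma colSum_eq_sum (F : Finset (ℤ × ℤ)) (j : ℤ) :
    colSum F j = ∑ p ∈ F, if p.2 = j then 1 else 0 := by
  rw [colSum, card_filter]
  push_cast
  rfl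

lemma rowSum_eq_card_filter {F : Finset (ℤ × ℤ)} {J : Finset ℤ} (hJ : ∀ p ∈ F, p.2 ∈ J)
    (i : ℤ) :
    rowSum F i = #(J.filter fun j => (i, j) ∈ F) := by
  rw [rowSum, card_nbij' Prod.snd (fun j => (i, j))]
  all_goals simp +contextual [Set.MapsTo, Set.LeftInvOn, Set.RightInvOn, hJ _]
  rintro _ _ h rfl
  exact h

lemma colSum_eq_card_filter {F : Finset (ℤ × ℤ)} {I : Finset ℤ} (hI : ∀ p ∈ F, p.1 ∈ I)
    (j : ℤ) :
    colSum F j = #(I.filter fun i => (i, j) ∈ F) := by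
  rw [colSum, card_nbij' Prod.fst (fun i => (i, j))]
  all_goals simp +contextual [Set.MapsTo, Set.LeftInvOn, Set.RightInvOn, hI _]
  rintro _ _ h rfl
  exact h

lemma sum_colSum_eq_card {F : Finset (ℤ × ℤ)} {J : Finset ℤ} (hJ : ∀ p ∈ F, p.2 ∈ J) :
    ∑ j ∈ J, colSum F j = #F := by
  rw [card_eq_sum_card_fiberwise hJ]
  push_cast
  rfl

lemma sum_rowSum_eq_card {F : Finset (ℤ × ℤ)} {I : Finset ℤ} (hI : ∀ p ∈ F, p.1 ∈ I) :
    ∑ i ∈ I, rowSum F i = #F := by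
  rw [card_eq_sum_card_fiberwise hI]
  push_cast
  rfl

lemma rowSum_nonneg (F : Finset (ℤ × ℤ)) (i : ℤ) : 0 ≤ rowSum F i := Int.natCast_nonneg _

lemma rowSum_pos_s9 {F : Finset (ℤ × ℤ)} {p : ℤ × ℤ} (hp : p ∈ F) : 0 < rowSum F p.1 :=
  Nat.cast_pos.2 (card_pos.2 ⟨p, mem_filter.2 ⟨hp, rfl⟩⟩)

lemma colSum_pos {F : Finset (ℤ × ℤ)} {p : ℤ × ℤ} (hp : p ∈ F) : 0 < colSum F p.2 :=
  Nat.cast_pos.2 (card_pos.2 ⟨p, mem_filter.2 ⟨hp, rfl⟩⟩)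

lemma snd_mem_Icc {F : Finset (ℤ × ℤ)} {n : ℕ}
    (hsupp : ∀ j : ℤ, j < 1 ∨ (n : ℤ) < j → colSum F j = 0) {p : ℤ × ℤ} (hp : p ∈ F) :
    p.2 ∈ Icc (1 : ℤ) n := by
  have h := colSum_pos hp
  by_contra hn
  rw [mem_Icc, not_and_or, not_le, not_le] at hn
  exact h.ne' (hsupp _ hn)

namespace uniquelyDetermined

variable {F : Finset (ℤ × ℤ)}

/-- Otherwise swapping the four points would give another set with the same line sums. -/
lemma mem_of_switch_s9 (hF : uniquelyDetermined F) {i₁ i₂ j₁ j₂ : ℤ} (hi : i₁ ≠ i₂)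
    (h₁₁ : (i₁, j₁) ∈ F) (h₂₂ : (i₂, j₂) ∈ F) (h₁₂ : (i₁, j₂) ∉ F) :
    (i₂, j₁) ∈ F := by
  by_contra h₂₁
  have hsum (f : ℤ × ℤ → ℤ) :=
    F.sum_insert_insert_erase_erase f h₁₂ h₂₁ (by simp [hi]) h₁₁ h₂₂ (by simp [hi])
  set F' := insert (i₁, j₂) (insert (i₂, j₁) ((F.erase (i₁, j₁)).erase (i₂, j₂)))
  have hrow (i : ℤ) : rowSum F' i = rowSum F i := by
    have := hsum fun p => if p.1 = i then 1 else 0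
    simp only [rowSum_eq_sum] at this ⊢
    split_ifs at this <;> omega
  have hcol (j : ℤ) : colSum F' j = colSum F j := by
    have := hsum fun p => if p.2 = j then 1 else 0
    simp only [colSum_eq_sum] at this ⊢
    split_ifs at this <;> omega
  exact h₁₂ (hF F' hrow hcol ▸ mem_insert_self _ _)

lemma mem_of_colSum_le (hF : uniquelyDetermined F) {i j₁ j₂ : ℤ}
    (hle : colSum F j₂ ≤ colSum F j₁) (h : (i, j₂) ∈ F) : (i, j₁) ∈ F := by
  by_contra h₁
  set R : ℤ → Finset ℤ := fun j => (F.image Prod.fst).filter fun i => (i, j) ∈ F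
  have hmemR {i j : ℤ} : i ∈ R j ↔ (i, j) ∈ F := by
    simpa [R] using fun h => ⟨_, h⟩
  have hcard : #(R j₂) ≤ #(R j₁) := by
    have hI : ∀ p ∈ F, p.1 ∈ F.image Prod.fst := fun p hp => mem_image_of_mem _ hp
    rw [← Int.ofNat_le, ← colSum_eq_card_filter hI, ← colSum_eq_card_filter hI]
    exact hle
  obtain ⟨i', hi'₁, hi'₂⟩ : ∃ i' ∈ R j₁, i' ∉ R j₂ := by
    by_contra! hsub
    exact h₁ (hmemR.1 (eq_of_subset_of_card_le hsub hcard ▸ hmemR.2 h))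
  have hi : i' ≠ i := by rintro rfl; exact hi'₂ (hmemR.2 h)
  exact h₁ (hF.mem_of_switch_s9 hi (hmemR.1 hi'₁) h (mt hmemR.2 hi'₂))

lemma mem_iff_lt_rowSum (hF : uniquelyDetermined F) {J : Finset ℤ} {κ : ℤ → ℕ} {m : ℕ}
    (hFJ : ∀ p ∈ F, p.2 ∈ J) (hκ : Set.BijOn κ J (Set.Iio m))
    (hanti : ∀ j ∈ J, ∀ j' ∈ J, κ j ≤ κ j' → colSum F j' ≤ colSum F j)
    (i : ℤ) {j : ℤ} (hj : j ∈ J) : (i, j) ∈ F ↔ (κ j : ℤ) < rowSum F i := by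
  set R := J.filter fun j => (i, j) ∈ F
  have hinj : Set.InjOn κ R := hκ.injOn.mono (coe_subset.2 (filter_subset _ _))
  have hlower : IsLowerSet (R.image κ : Set ℕ) := by
    intro a b hba ha
    obtain ⟨j₁, hj₁, rfl⟩ := mem_image.1 ha
    obtain ⟨hj₁J, hj₁F⟩ := mem_filter.1 hj₁
    obtain ⟨j₂, hj₂J, rfl⟩ := hκ.surjOn (lt_of_le_of_lt hba (hκ.mapsTo hj₁J))
    exact mem_image_of_mem κ
      (mem_filter.2 ⟨hj₂J, hF.mem_of_colSum_le (hanti _ hj₂J _ hj₁J hba) hj₁F⟩)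
  have hjR : (i, j) ∈ F ↔ κ j ∈ R.image κ := by
    constructor
    · exact fun h => mem_image_of_mem κ (mem_filter.2 ⟨hj, h⟩)
    · rintro h
      obtain ⟨j', hj', he⟩ := mem_image.1 h
      exact hκ.injOn (filter_subset _ _ hj') hj he ▸ (mem_filter.1 hj').2
  rw [hjR, mem_iff_lt_card_of_isLowerSet hlower, card_image_of_injOn hinj,
    rowSum_eq_card_filter hFJ]
  exact_mod_cast Iff.rfl

end uniquelyDetermined

def colExcess (G H : Finset (ℤ × ℤ)) : ℤ :=
  ∑ j ∈ (G ∪ H).image Prod.snd, max (colSum G j - colSum H j) 0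

lemma colExcess_nonneg (G H : Finset (ℤ × ℤ)) : 0 ≤ colExcess G H :=
  sum_nonneg fun _ _ => le_max_right _ _

/-- With equal row sums the column sums have equal totals, so the total column deficit equals
the total column excess. -/
lemma lineDiff_eq_two_mul_colExcess {G H : Finset (ℤ × ℤ)}
    (hrow : ∀ i, rowSum G i = rowSum H i) : lineDiff G H = 2 * colExcess G H := by
  have hI : ∀ p ∈ G ∪ H, p.1 ∈ (G ∪ H).image Prod.fst := fun p hp => mem_image_of_mem _ hp
  have hJ : ∀ p ∈ G ∪ H, p.2 ∈ (G ∪ H).image Prod.snd := fun p hp => mem_image_of_mem _ hp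
  have hcard : #G = #H := by
    have h := sum_congr rfl fun i (_ : i ∈ (G ∪ H).image Prod.fst) => hrow i
    rwa [sum_rowSum_eq_card fun p hp => hI p (mem_union_left _ hp),
      sum_rowSum_eq_card fun p hp => hI p (mem_union_right _ hp), Nat.cast_inj] at h
  have htotal : ∑ j ∈ (G ∪ H).image Prod.snd, (colSum G j - colSum H j) = 0 := by
    rw [sum_sub_distrib, sum_colSum_eq_card fun p hp => hJ p (mem_union_left _ hp),
      sum_colSum_eq_card fun p hp => hJ p (mem_union_right _ hp), hcard, sub_self]
  have habs (x : ℤ) : |x| = 2 * max x 0 - x := by rw [abs_eq_max_neg]; omega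
  simp only [lineDiff, colExcess, hrow, sub_self, abs_zero, sum_const_zero, add_zero]
  rw [sum_congr rfl fun j _ => habs _, sum_sub_distrib, ← mul_sum, htotal, sub_zero]

section Counting

variable {G H : Finset (ℤ × ℤ)} {κ : ℤ → ℕ}

lemma card_le_of_rank_mem {F S : Finset (ℤ × ℤ)} (hinj : Set.InjOn κ (F.image Prod.snd))
    (hSF : S ⊆ F) {i : ℤ} (hrow : ∀ p ∈ S, p.1 = i) {X : Finset ℕ}
    (hX : ∀ p ∈ S, κ p.2 ∈ X) : #S ≤ #X := by
  refine card_le_card_of_injOn (fun p => κ p.2) hX fun p hp q hq h => Prod.ext ?_ ?_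
  · rw [hrow p hp, hrow q hq]
  · exact hinj (mem_image_of_mem _ (hSF hp)) (mem_image_of_mem _ (hSF hq)) h

/-- The points of `H` in row `i` of rank at least `t` have their ranks in `[t, rowSum G i)`,
while at most `t` of the `rowSum G i` points of `G` in that row have rank below `t`. -/
lemma card_row_rank_ge_le (hinj : Set.InjOn κ ((G ∪ H).image Prod.snd))
    (hH : ∀ p ∈ H, (κ p.2 : ℤ) < rowSum G p.1) (i : ℤ) (t : ℕ) :
    #(H.filter fun p => p.1 = i ∧ t ≤ κ p.2) ≤
      if (t : ℤ) < rowSum G i then #(G.filter fun p => p.1 = i ∧ t ≤ κ p.2) else 0 := by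
  have hinjG := hinj.mono (coe_subset.2 (image_subset_image subset_union_left))
  have hinjH := hinj.mono (coe_subset.2 (image_subset_image subset_union_right))
  have hHrow : #(H.filter fun p => p.1 = i ∧ t ≤ κ p.2) ≤ #(Ico t (rowSum G i).toNat) := by
    refine card_le_of_rank_mem hinjH (filter_subset _ _) (fun p hp => (mem_filter.1 hp).2.1)
      fun p hp => ?_
    obtain ⟨hpH, rfl, ht⟩ := mem_filter.1 hp
    have := hH p hpH
    exact mem_Ico.2 ⟨ht, by omega⟩
  have hGlow : #(G.filter fun p => p.1 = i ∧ κ p.2 < t) ≤ #(range t) :=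
    card_le_of_rank_mem hinjG (filter_subset _ _) (fun p hp => (mem_filter.1 hp).2.1)
      fun p hp => mem_range.2 (mem_filter.1 hp).2.2
  have hGrow : #(G.filter fun p => p.1 = i ∧ κ p.2 < t) +
      #(G.filter fun p => p.1 = i ∧ t ≤ κ p.2) = rowSum G i := by
    have h := card_filter_add_card_filter_not (s := G.filter (·.1 = i)) (fun p => κ p.2 < t)
    simp only [filter_filter, not_lt] at h
    rw [rowSum, ← h, Nat.cast_add]
  rw [Nat.card_Ico] at hHrow
  rw [card_range] at hGlow
  split_ifs <;> omega

lemma card_rank_ge_le (hinj : Set.InjOn κ ((G ∪ H).image Prod.snd))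
    (hH : ∀ p ∈ H, (κ p.2 : ℤ) < rowSum G p.1) (t : ℕ) :
    #(H.filter fun p => t ≤ κ p.2) ≤
      #(G.filter fun p => t ≤ κ p.2 ∧ (t : ℤ) < rowSum G p.1) := by
  have hI : ∀ p ∈ G ∪ H, p.1 ∈ (G ∪ H).image Prod.fst := fun p hp => mem_image_of_mem _ hp
  rw [card_eq_sum_card_fiberwise fun p hp => hI p (mem_union_right _ (mem_filter.1 hp).1),
    card_eq_sum_card_fiberwise fun p hp => hI p (mem_union_left _ (mem_filter.1 hp).1)]
  refine sum_le_sum fun i _ => ?_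
  have hi := card_row_rank_ge_le hinj hH i t
  have hHi : (H.filter fun p => t ≤ κ p.2).filter (·.1 = i) =
      H.filter fun p => p.1 = i ∧ t ≤ κ p.2 := by
    rw [filter_filter]
    exact filter_congr fun _ _ => and_comm
  rw [hHi]
  split_ifs at hi with hti
  · refine hi.trans_eq (congrArg card ?_)
    rw [filter_filter]
    refine filter_congr fun p _ =>
      ⟨fun ⟨hp, h⟩ => ⟨⟨h, ?_⟩, hp⟩, fun ⟨⟨h, _⟩, hp⟩ => ⟨hp, h⟩⟩
    rwa [hp]
  · exact hi.trans (Nat.zero_le _)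

lemma card_rank_ge_eq_sum_colSum {F : Finset (ℤ × ℤ)} {J : Finset ℤ}
    (hJ : ∀ p ∈ F, p.2 ∈ J) (t : ℕ) :
    (#(F.filter fun p => t ≤ κ p.2) : ℤ) =
      ∑ j ∈ J.filter fun j => t ≤ κ j, colSum F j := by
  have hmaps : ∀ p ∈ F.filter fun p => t ≤ κ p.2, p.2 ∈ J.filter fun j => t ≤ κ j :=
    fun p hp => mem_filter.2 ⟨hJ p (mem_filter.1 hp).1, (mem_filter.1 hp).2⟩
  rw [card_eq_sum_card_fiberwise hmaps]
  push_cast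
  refine sum_congr rfl fun j hj => ?_
  rw [colSum, filter_filter]
  congr 2
  exact filter_congr fun p _ =>
    ⟨fun h => h.2, fun h => ⟨h ▸ (mem_filter.1 hj).2, h⟩⟩

lemma card_rank_ge_sub_le_colExcess (t : ℕ) :
    (#(G.filter fun p => t ≤ κ p.2) : ℤ) - #(H.filter fun p => t ≤ κ p.2) ≤
      colExcess G H := by
  have hJ : ∀ p ∈ G ∪ H, p.2 ∈ (G ∪ H).image Prod.snd := fun p hp => mem_image_of_mem _ hp
  rw [card_rank_ge_eq_sum_colSum fun p hp => hJ p (mem_union_left _ hp),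
    card_rank_ge_eq_sum_colSum fun p hp => hJ p (mem_union_right _ hp), ← sum_sub_distrib]
  exact (sum_le_sum fun j _ => le_max_left _ _).trans
    (sum_le_sum_of_subset_of_nonneg (filter_subset _ _) fun _ _ _ => le_max_right _ _)

lemma card_sdiff_filter_rowSum_eq_le (hinj : Set.InjOn κ ((G ∪ H).image Prod.snd))
    (hstair : ∀ p ∈ G ∪ H, p ∈ H ↔ (κ p.2 : ℤ) < rowSum G p.1) (t : ℕ) :
    (#((G \ H).filter fun p => rowSum G p.1 = t) : ℤ) ≤ colExcess G H := by
  have hH : ∀ p ∈ H, (κ p.2 : ℤ) < rowSum G p.1 :=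
    fun p hp => (hstair p (mem_union_right _ hp)).1 hp
  have hsub : (G \ H).filter (fun p => rowSum G p.1 = t) ⊆
      G.filter fun p => t ≤ κ p.2 ∧ ¬ (t : ℤ) < rowSum G p.1 := by
    intro p hp
    obtain ⟨hpGH, hpt⟩ := mem_filter.1 hp
    obtain ⟨hpG, hpH⟩ := mem_sdiff.1 hpGH
    have := mt (hstair p (mem_union_left _ hpG)).2 hpH
    exact mem_filter.2 ⟨hpG, by omega, by omega⟩
  have hsplit := card_filter_add_card_filter_not (s := G.filter fun p => t ≤ κ p.2)
    fun p => (t : ℤ) < rowSum G p.1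
  simp only [filter_filter] at hsplit
  have h₁ := card_le_card hsub
  have h₂ := card_rank_ge_le hinj hH t
  have h₃ := card_rank_ge_sub_le_colExcess (G := G) (H := H) (κ := κ) t
  -- `#(G \ H, row sum t) ≤ #(G, rank ≥ t, row sum ≤ t)`
  -- `= #(G, rank ≥ t) - #(G, rank ≥ t, row sum > t) ≤ #(G, rank ≥ t) - #(H, rank ≥ t)`
  omega

lemma card_sdiff_le_mul_colExcess (hinj : Set.InjOn κ ((G ∪ H).image Prod.snd))
    (hstair : ∀ p ∈ G ∪ H, p ∈ H ↔ (κ p.2 : ℤ) < rowSum G p.1) :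
    (#(G \ H) : ℤ) ≤ #(G.image fun p => rowSum G p.1) * colExcess G H := by
  have hmaps : ∀ p ∈ G \ H, rowSum G p.1 ∈ G.image fun p => rowSum G p.1 :=
    fun p hp => mem_image_of_mem _ (mem_sdiff.1 hp).1
  rw [card_eq_sum_card_fiberwise hmaps, ← nsmul_eq_mul, ← sum_const, Nat.cast_sum]
  refine sum_le_sum fun t ht => ?_
  obtain ⟨p, -, rfl⟩ := mem_image.1 ht
  have h := card_sdiff_filter_rowSum_eq_le hinj hstair (rowSum G p.1).toNat
  rwa [Int.toNat_of_nonneg (rowSum_nonneg G p.1)] at h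

end Counting

lemma sum_image_rowSum_le_card (G : Finset (ℤ × ℤ)) :
    ∑ t ∈ G.image (fun p => rowSum G p.1), t ≤ #G := by
  have hmaps : ∀ p ∈ G, rowSum G p.1 ∈ G.image fun p => rowSum G p.1 :=
    fun p hp => mem_image_of_mem _ hp
  rw [card_eq_sum_card_fiberwise hmaps, Nat.cast_sum]
  refine sum_le_sum fun t ht => ?_
  obtain ⟨p, -, rfl⟩ := mem_image.1 ht
  exact Nat.cast_le.2
    (card_le_card (monotone_filter_right _ fun q _ h => congrArg (rowSum G) h))

lemma card_image_rowSum_mul_add_one_le (G : Finset (ℤ × ℤ)) :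
    (#(G.image fun p => rowSum G p.1) : ℤ) * (#(G.image fun p => rowSum G p.1) + 1) ≤
      2 * #G := by
  have hpos : ∀ t ∈ G.image fun p => rowSum G p.1, 0 < t := by
    intro t ht
    obtain ⟨p, hp, rfl⟩ := mem_image.1 ht
    exact rowSum_pos_s9 hp
  exact (card_mul_card_add_one_le_two_mul_sum_s9 hpos).trans
    (mul_le_mul_of_nonneg_left (sum_image_rowSum_le_card G) zero_le_two)

section ColRank

variable {n : ℕ} (σ : Equiv.Perm (Fin n))

/-- The position of column `j` in the list `σ 0 + 1, σ 1 + 1, …` of the columns `1, …, n`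
(junk value `0` for other `j`). -/
def colRank (j : ℤ) : ℕ :=
  if h : (j - 1).toNat < n then σ.symm ⟨(j - 1).toNat, h⟩ else 0

lemma exists_colRank_eq {j : ℤ} (hj : j ∈ Icc (1 : ℤ) n) :
    ∃ k : Fin n, colRank σ j = k ∧ ((σ k : ℕ) : ℤ) + 1 = j := by
  have hj' := mem_Icc.1 hj
  have h : (j - 1).toNat < n := by omega
  refine ⟨σ.symm ⟨_, h⟩, dif_pos h, ?_⟩
  rw [Equiv.apply_symm_apply]
  simp only
  omega

lemma colRank_bijOn : Set.BijOn (colRank σ) (Icc (1 : ℤ) n : Finset ℤ) (Set.Iio n) := by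
  refine ⟨fun j hj => ?_, fun j hj j' hj' h => ?_, fun a (ha : a < n) => ?_⟩
  · obtain ⟨k, hk, -⟩ := exists_colRank_eq σ hj
    exact hk ▸ k.isLt
  · obtain ⟨k, hk, rfl⟩ := exists_colRank_eq σ hj
    obtain ⟨k', hk', rfl⟩ := exists_colRank_eq σ hj'
    rw [hk, hk', Fin.val_inj] at h
    rw [h]
  · have hj : ((σ ⟨a, ha⟩ : ℕ) : ℤ) + 1 ∈ Icc (1 : ℤ) n := by
      have := (σ ⟨a, ha⟩).isLt
      rw [mem_Icc]
      omega
    obtain ⟨k, hk, he⟩ := exists_colRank_eq σ hj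
    refine ⟨_, hj, ?_⟩
    rw [hk, σ.injective (Fin.ext (by omega : (σ k : ℕ) = σ ⟨a, ha⟩))]

lemma colSum_le_of_colRank_le {F : Finset (ℤ × ℤ)}
    (hsort : ∀ k l : Fin n, k ≤ l →
      colSum F ((σ l : ℕ) + 1 : ℤ) ≤ colSum F ((σ k : ℕ) + 1 : ℤ)) :
    ∀ j ∈ Icc (1 : ℤ) n, ∀ j' ∈ Icc (1 : ℤ) n, colRank σ j ≤ colRank σ j' →
      colSum F j' ≤ colSum F j := by
  intro j hj j' hj' h
  obtain ⟨k, hk, rfl⟩ := exists_colRank_eq σ hj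
  obtain ⟨k', hk', rfl⟩ := exists_colRank_eq σ hj'
  exact hsort k k' (by rw [hk, hk'] at h; exact h)

end ColRank

lemma one_sub_sqrt_two_mul_div_sqrt_le {N s : ℕ} {d a : ℝ} (hN : 0 < N) (ha : 0 ≤ a)
    (hd : d ≤ s * a) (hs : s * (s + 1) ≤ 2 * N) :
    1 - √2 * a / √N ≤ (N - d) / N := by
  have hN' : (0 : ℝ) < N := Nat.cast_pos.2 hN
  have hsqrt : (0 : ℝ) < √N := Real.sqrt_pos.2 hN'
  have hs' : (s : ℝ) ≤ √2 * √N := by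
    rw [← Real.sqrt_mul zero_le_two]
    refine Real.le_sqrt_of_sq_le ?_
    exact_mod_cast (by nlinarith : s ^ 2 ≤ 2 * N)
  have hcancel : √2 * a / √N * N = √2 * √N * a := by
    rw [div_mul_eq_mul_div, div_eq_iff hsqrt.ne']
    linear_combination (-(√2 * a)) * Real.mul_self_sqrt hN'.le
  rw [le_div_iff₀ hN', sub_mul, one_mul, hcancel]
  nlinarith

/-- If `F2` is nonempty and `F1` is a uniquely determined neighbour of `F2`, then with
`α = α(F2, F1)` we have `|F2 ∩ F1| / |F2| ≥ 1 − √2·α / √|F2|`. -/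
theorem inter_card_ratio_ge (F2 F1 : Finset (ℤ × ℤ)) (hF2 : F2.Nonempty)
    (hnb : udNeighbour F1 F2) :
    1 - Real.sqrt 2 * alpha F2 F1 / Real.sqrt F2.card ≤
      ((F2 ∩ F1).card : ℝ) / F2.card := by
  obtain ⟨hud, hrow, n, h2supp, h1supp, σ, -, hsort⟩ := hnb
  have hJ : ∀ p ∈ F2 ∪ F1, p.2 ∈ Icc (1 : ℤ) n := fun p hp =>
    (mem_union.1 hp).elim (snd_mem_Icc h2supp) (snd_mem_Icc h1supp)
  have hinj : Set.InjOn (colRank σ) ((F2 ∪ F1).image Prod.snd) :=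
    (colRank_bijOn σ).injOn.mono (coe_subset.2 (image_subset_iff.2 hJ))
  have hstair : ∀ p ∈ F2 ∪ F1, p ∈ F1 ↔ (colRank σ p.2 : ℤ) < rowSum F2 p.1 := by
    intro p hp
    rw [← hrow]
    exact hud.mem_iff_lt_rowSum (fun q hq => snd_mem_Icc h1supp hq) (colRank_bijOn σ)
      (colSum_le_of_colRank_le σ hsort) p.1 (hJ p hp)
  have hcount := card_sdiff_le_mul_colExcess hinj hstair
  have hrows := card_image_rowSum_mul_add_one_le F2
  have hα : alpha F2 F1 = colExcess F2 F1 := by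
    rw [alpha, lineDiff_eq_two_mul_colExcess fun i => (hrow i).symm]
    push_cast
    ring
  have hinter : ((F2 ∩ F1).card : ℝ) = F2.card - (F2 \ F1).card := by
    rw [← card_sdiff_add_card_inter F2 F1, Nat.cast_add, add_sub_cancel_left]
  rw [hα, hinter]
  exact one_sub_sqrt_two_mul_div_sqrt_le (card_pos.2 hF2)
    (Int.cast_nonneg (colExcess_nonneg F2 F1)) (by exact_mod_cast hcount)
    (by exact_mod_cast hrows)
end
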